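/- Assume τ is an automorphism of F. Then: (i) for every b ∈ k[t], τ(Λ_b) = Λ_{τ(b)}, where τ(b) := b(t+1); (ii) if a = ∏_{i∈I} P_i^{r_i} is monic nonconstant with P_i pairwise distinct monic irreducible, and J ⊆ I satisfies (1) for distinct j_1, j_2 ∈ J and all h ∈ ℤ the polynomials P_{j_1} and τ^h(P_{j_2}) are coprime, and (2) for every i ∈ I∖J there exist h ∈ ℤ and j ∈ J with τ^h(P_i) = P_j and r_i ≤ r_j, then, setting â := ∏_{j∈J} P_j^{r_j}, the subfields of F generated by k(ν) together with Λ_a, respectively Λ_â, coincide: K(Λ_a) = K(Λ_â). -/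

import Mathlib

/-!
Write `T = μ_ν - τ`, so that `C_b = b(T)`. From `τ ν = ν + 1` one gets `τ ∘ T = (T + 1) ∘ τ`, hence
`τ ∘ C_b = C_{b(t+1)} ∘ τ`, which is (i).

For (ii) the point is that `K(Λ_c) = K(Λ_{c(t+1)})` for `c ≠ 0`. Since `τ x = ν x - T x` and `Λ_c`
is `T`-stable, `Λ_{c(t+1)} = τ(Λ_c) ⊆ K(Λ_c)`. Conversely, for `x ∈ Λ_c` and every polynomial `p`,
`p(ν) x - C_p x` lies in the field generated by `ν` and `τ(Λ_c)`; for `p = c` this puts `c(ν) x` in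
`K(Λ_{c(t+1)})`, and `c(ν) ≠ 0` because `ν` is transcendental over `k` (a root `ν` of `c` would
give the roots `ν + n`, `n ∈ ℕ`). So shifting the variable by an integer does not change `K(Λ_c)`.
Distinct monic irreducibles are coprime, so `Λ_a` is the sum of the `Λ_{P_i^{r_i}}`, and by (2)
each of these lies in `K(Λ_{P_j^{r_j}}) ⊆ K(Λ_â)` for some `j ∈ J`.
-/

open Polynomial

noncomputable section

variable {F : Type*} [Field F]

/-- The fixed subfield `k = F^τ` of a difference field `(F, τ)`. -/
def kfix (τ : F →+* F) : Subfield F := RingHom.eqLocusField τ (RingHom.id F)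

/-- `τ` as a `k`-linear endomorphism of `F`. -/
def tauLin (τ : F →+* F) : F →ₗ[kfix τ] F where
  toFun := τ
  map_add' := map_add τ
  map_smul' := by
    intro c x
    show τ ((c : F) * x) = (c : F) * τ x
    rw [map_mul, c.2]
    rfl

/-- The Carlitz module map `a ↦ C_a = a(μ_ν − τ)` : the unique `k`-algebra morphism from
`k[t]` to the `k`-linear endomorphisms of `F` sending `t` to `μ_ν − τ`. -/
def carlitz (τ : F →+* F) (ν : F) : Polynomial (kfix τ) →ₐ[kfix τ] Module.End (kfix τ) F :=
  Polynomial.aeval (LinearMap.mulLeft (kfix τ) ν - tauLin τ)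

theorem Polynomial.semiconjBy_aeval {R A : Type*} [CommSemiring R] [Semiring A] [Algebra R A]
    {u x y : A} (h : SemiconjBy u x y) (p : R[X]) : SemiconjBy u (aeval x p) (aeval y p) := by
  induction p using Polynomial.induction_on' with
  | add p q hp hq => simpa only [map_add] using hp.add_right hq
  | monomial n a =>
    simp only [aeval_monomial]
    exact SemiconjBy.mul_right (Algebra.commutes a u).symm (h.pow_right n)

theorem Polynomial.ker_aeval_prod_eq_iSup {R M ι : Type*} [CommRing R] [AddCommGroup M]
    [Module R M] (f : Module.End R M) {s : Finset ι} {q : ι → R[X]}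
    (hq : (s : Set ι).Pairwise fun i j => IsCoprime (q i) (q j)) :
    LinearMap.ker (aeval f (∏ i ∈ s, q i)) = ⨆ i ∈ s, LinearMap.ker (aeval f (q i)) := by
  classical
  induction s using Finset.induction_on with
  | empty => simp [Module.End.one_eq_id]
  | insert a s ha ih =>
    have hqa : IsCoprime (q a) (∏ i ∈ s, q i) := IsCoprime.prod_right fun i hi =>
      hq (by simp) (by simp [hi]) (ne_of_mem_of_not_mem hi ha).symm
    rw [Finset.prod_insert ha, ← sup_ker_aeval_eq_ker_aeval_mul_of_coprime f hqa,
      ih (hq.mono (by simp)), Finset.iSup_insert]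

theorem Polynomial.Monic.isCoprime_pow_of_irreducible {K : Type*} [Field K] {p q : K[X]}
    (hp : p.Monic) (hq : q.Monic) (hp' : Irreducible p) (hq' : Irreducible q) (hpq : p ≠ q)
    (m n : ℕ) : IsCoprime (p ^ m) (q ^ n) :=
  ((hp'.coprime_iff_not_dvd).2 fun h =>
    hpq (eq_of_monic_of_associated hp hq (hp'.associated_of_dvd hq' h))).pow

section Carlitz

variable (τ : F →+* F) (ν : F)

def tauAlgHom : F →ₐ[kfix τ] F := { τ with commutes' := fun a => a.2 }

theorem transcendental_of_map_eq_add_one [CharZero F] (hν : τ ν = ν + 1) :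
    Transcendental (kfix τ) ν := by
  refine transcendental_iff.2 fun p hp => ?_
  have hroot : ∀ n : ℕ, aeval (ν + n) p = 0 := by
    intro n
    induction n with
    | zero => simpa using hp
    | succ n ih =>
      have : tauAlgHom τ (ν + n) = ν + (n + 1 : ℕ) := by
        change τ (ν + n) = _
        rw [map_add, map_natCast, hν]
        push_cast
        ring
      rw [← this, aeval_algHom_apply, ih, map_zero]
  refine (Polynomial.map_eq_zero_iff (algebraMap (kfix τ) F).injective).1
    (eq_zero_of_infinite_isRoot _ (Set.infinite_of_injective_forall_mem
      (f := fun n : ℕ => ν + n) (fun m n h => by simpa using h) fun n => ?_))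
  simpa [IsRoot, eval_map_algebraMap] using hroot n

theorem carlitz_X_apply (x : F) : carlitz τ ν X x = ν * x - τ x := by
  rw [carlitz, aeval_X]
  rfl

theorem carlitz_apply_mem_ker {c : (kfix τ)[X]} (p : (kfix τ)[X]) {x : F}
    (hx : x ∈ LinearMap.ker (carlitz τ ν c)) : carlitz τ ν p x ∈ LinearMap.ker (carlitz τ ν c) := by
  rw [LinearMap.mem_ker] at hx ⊢
  rw [← Module.End.mul_apply, ← map_mul, mul_comm, map_mul, Module.End.mul_apply, hx, map_zero]

theorem tauLin_mul_carlitz (hν : τ ν = ν + 1) (b : (kfix τ)[X]) :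
    tauLin τ * carlitz τ ν b = carlitz τ ν (b.comp (X + 1)) * tauLin τ := by
  have hX : SemiconjBy (tauLin τ) (carlitz τ ν X) (carlitz τ ν (X + 1)) := by
    ext x
    simp only [Module.End.mul_apply, map_add, map_one, LinearMap.add_apply,
      Module.End.one_apply, carlitz_X_apply]
    change τ (ν * x - τ x) = ν * τ x - τ (τ x) + τ x
    rw [map_sub, map_mul, hν]
    ring
  have hb : carlitz τ ν b = aeval (carlitz τ ν X) b := by
    rw [aeval_algHom_apply, aeval_X_left_apply]
  rw [hb, comp_eq_aeval, ← aeval_algHom_apply]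
  exact semiconjBy_aeval hX b

theorem map_carlitz_apply (hν : τ ν = ν + 1) (b : (kfix τ)[X]) (x : F) :
    τ (carlitz τ ν b x) = carlitz τ ν (b.comp (X + 1)) (τ x) :=
  LinearMap.congr_fun (tauLin_mul_carlitz τ ν hν b) x

theorem ker_carlitz_mono {c d : (kfix τ)[X]} (h : c ∣ d) :
    LinearMap.ker (carlitz τ ν c) ≤ LinearMap.ker (carlitz τ ν d) := by
  obtain ⟨e, rfl⟩ := h
  rw [mul_comm, map_mul, Module.End.mul_eq_comp]
  exact LinearMap.ker_le_ker_comp _ _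

/-- `K(Λ_c)`, as an intermediate field of `F / k`. -/
def carlitzTorsionField (c : (kfix τ)[X]) : IntermediateField (kfix τ) F :=
  IntermediateField.adjoin (kfix τ) (insert ν (LinearMap.ker (carlitz τ ν c) : Set F))

theorem carlitzTorsionField_le_iff {c : (kfix τ)[X]} {E : IntermediateField (kfix τ) F} :
    carlitzTorsionField τ ν c ≤ E ↔ ν ∈ E ∧ (LinearMap.ker (carlitz τ ν c) : Set F) ⊆ E := by
  rw [carlitzTorsionField, IntermediateField.adjoin_le_iff, Set.insert_subset_iff]
  rfl

theorem self_mem_carlitzTorsionField (c : (kfix τ)[X]) : ν ∈ carlitzTorsionField τ ν c :=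
  IntermediateField.subset_adjoin _ _ (Set.mem_insert _ _)

theorem ker_carlitz_subset_carlitzTorsionField (c : (kfix τ)[X]) :
    (LinearMap.ker (carlitz τ ν c) : Set F) ⊆ carlitzTorsionField τ ν c :=
  (Set.subset_insert _ _).trans (IntermediateField.subset_adjoin _ _)

theorem toSubfield_carlitzTorsionField (c : (kfix τ)[X]) :
    (carlitzTorsionField τ ν c).toSubfield =
      Subfield.closure (((kfix τ : Set F) ∪ {ν}) ∪ (LinearMap.ker (carlitz τ ν c) : Set F)) := by
  rw [carlitzTorsionField, IntermediateField.adjoin_toSubfield, Set.union_assoc,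
    ← Set.insert_eq]
  have hk : Set.range (algebraMap (kfix τ) F) = kfix τ := Subtype.range_coe
  rw [hk]

theorem carlitzTorsionField_mono {c d : (kfix τ)[X]} (h : c ∣ d) :
    carlitzTorsionField τ ν c ≤ carlitzTorsionField τ ν d :=
  IntermediateField.adjoin.mono _ _ _ (Set.insert_subset_insert (ker_carlitz_mono τ ν h))

theorem carlitzTorsionField_prod_le {ι : Type*} {s : Finset ι}
    {q : ι → (kfix τ)[X]} (hq : (s : Set ι).Pairwise fun i j => IsCoprime (q i) (q j))
    {E : IntermediateField (kfix τ) F} (hνE : ν ∈ E)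
    (h : ∀ i ∈ s, carlitzTorsionField τ ν (q i) ≤ E) :
    carlitzTorsionField τ ν (∏ i ∈ s, q i) ≤ E := by
  refine (carlitzTorsionField_le_iff τ ν).2 ⟨hνE, ?_⟩
  change LinearMap.ker (carlitz τ ν (∏ i ∈ s, q i)) ≤ Subalgebra.toSubmodule E.toSubalgebra
  rw [carlitz, ker_aeval_prod_eq_iSup _ hq]
  exact iSup₂_le fun i hi => ((carlitzTorsionField_le_iff τ ν).1 (h i hi)).2

theorem aeval_mul_sub_carlitz_apply_mem {E : IntermediateField (kfix τ) F} (hνE : ν ∈ E)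
    {c : (kfix τ)[X]} (hE : ∀ y ∈ LinearMap.ker (carlitz τ ν c), τ y ∈ E) {x : F}
    (hx : x ∈ LinearMap.ker (carlitz τ ν c)) (p : (kfix τ)[X]) :
    aeval ν p * x - carlitz τ ν p x ∈ E := by
  induction p using Polynomial.induction_on with
  | C a =>
    rw [aeval_C, carlitz, aeval_C, Module.algebraMap_end_apply, Algebra.smul_def, sub_self]
    exact zero_mem E
  | add p q hp hq =>
    rw [map_add, map_add, LinearMap.add_apply, add_mul, add_sub_add_comm]
    exact add_mem hp hq
  | monomial n a ih =>
    rw [show C a * X ^ (n + 1) = X * (C a * X ^ n) by ring]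
    generalize C a * X ^ n = q at ih ⊢
    have key : aeval ν (X * q) * x - carlitz τ ν (X * q) x =
        ν * (aeval ν q * x - carlitz τ ν q x) + τ (carlitz τ ν q x) := by
      rw [map_mul (aeval ν), map_mul (carlitz τ ν), Module.End.mul_apply, carlitz_X_apply,
        aeval_X]
      ring
    rw [key]
    exact add_mem (mul_mem hνE ih) (hE _ (carlitz_apply_mem_ker τ ν q hx))

theorem carlitzTorsionField_le_comp_X_add_one [CharZero F] (hν : τ ν = ν + 1)
    {c : (kfix τ)[X]} (hc : c ≠ 0) :
    carlitzTorsionField τ ν c ≤ carlitzTorsionField τ ν (c.comp (X + 1)) := by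
  set E := carlitzTorsionField τ ν (c.comp (X + 1))
  have hνE : ν ∈ E := self_mem_carlitzTorsionField τ ν _
  have hE : ∀ y ∈ LinearMap.ker (carlitz τ ν c), τ y ∈ E := fun y hy =>
    ker_carlitz_subset_carlitzTorsionField τ ν _ <| by
      rw [SetLike.mem_coe, LinearMap.mem_ker, ← map_carlitz_apply τ ν hν, hy, map_zero]
  refine (carlitzTorsionField_le_iff τ ν).2 ⟨hνE, fun x hx => ?_⟩
  have hcx := aeval_mul_sub_carlitz_apply_mem τ ν hνE hE hx c
  rw [LinearMap.mem_ker.1 hx, sub_zero] at hcx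
  have hcE : aeval ν c ∈ E := by
    have h := SetLike.coe_mem (aeval (⟨ν, hνE⟩ : E) c)
    rwa [← IntermediateField.aeval_coe] at h
  have hc0 : aeval ν c ≠ 0 :=
    fun h => hc (transcendental_iff.1 (transcendental_of_map_eq_add_one τ ν hν) c h)
  simpa [hc0] using div_mem hcx hcE

end Carlitz

section RingEquiv

variable (τ : F ≃+* F) (ν : F)

theorem image_ker_carlitz (hν : τ ν = ν + 1) (b : (kfix (τ : F →+* F))[X]) :
    ⇑τ '' (LinearMap.ker (carlitz (τ : F →+* F) ν b) : Set F) =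
      LinearMap.ker (carlitz (τ : F →+* F) ν (b.comp (X + 1))) := by
  ext y
  rw [τ.image_eq_preimage_symm, Set.mem_preimage, SetLike.mem_coe, SetLike.mem_coe,
    LinearMap.mem_ker, LinearMap.mem_ker, ← map_eq_zero_iff τ τ.injective]
  have h := map_carlitz_apply (τ : F →+* F) ν hν b (τ.symm y)
  simp only [RingHom.coe_coe, RingEquiv.apply_symm_apply] at h
  rw [h]

theorem carlitzTorsionField_comp_X_add_one_le (hν : τ ν = ν + 1) (c : (kfix (τ : F →+* F))[X]) :
    carlitzTorsionField (τ : F →+* F) ν (c.comp (X + 1)) ≤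
      carlitzTorsionField (τ : F →+* F) ν c := by
  have hE := ker_carlitz_subset_carlitzTorsionField (τ : F →+* F) ν c
  refine (carlitzTorsionField_le_iff _ ν).2 ⟨self_mem_carlitzTorsionField _ ν c, ?_⟩
  rw [← image_ker_carlitz τ ν hν]
  rintro _ ⟨x, hx, rfl⟩
  have hτx : τ x = ν * x - carlitz (τ : F →+* F) ν X x := by
    rw [carlitz_X_apply, RingHom.coe_coe]
    ring
  rw [hτx]
  exact sub_mem (mul_mem (self_mem_carlitzTorsionField _ ν c) (hE hx))
    (hE (carlitz_apply_mem_ker _ ν X hx))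

theorem carlitzTorsionField_comp_X_add_one [CharZero F] (hν : τ ν = ν + 1)
    {c : (kfix (τ : F →+* F))[X]} (hc : c ≠ 0) :
    carlitzTorsionField (τ : F →+* F) ν (c.comp (X + 1)) = carlitzTorsionField (τ : F →+* F) ν c :=
  le_antisymm (carlitzTorsionField_comp_X_add_one_le τ ν hν c)
    (carlitzTorsionField_le_comp_X_add_one _ ν hν hc)

theorem carlitzTorsionField_comp_X_add_intCast [CharZero F] (hν : τ ν = ν + 1)
    {c : (kfix (τ : F →+* F))[X]} (hc : c ≠ 0) (h : ℤ) :
    carlitzTorsionField (τ : F →+* F) ν (c.comp (X + C (h : kfix (τ : F →+* F)))) =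
      carlitzTorsionField (τ : F →+* F) ν c := by
  have hshift (a : kfix (τ : F →+* F)) :
      c.comp (X + C (a + 1)) = (c.comp (X + C a)).comp (X + 1) := by
    rw [comp_assoc, add_comp, X_comp, C_comp, C_add, C_1, add_right_comm, add_assoc]
  have hstep (a : kfix (τ : F →+* F)) :
      carlitzTorsionField (τ : F →+* F) ν (c.comp (X + C (a + 1))) =
        carlitzTorsionField (τ : F →+* F) ν (c.comp (X + C a)) := by
    rw [hshift, carlitzTorsionField_comp_X_add_one τ ν hν (comp_X_add_C_ne_zero_iff.2 hc)]
  induction h using Int.induction_on with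
  | zero => simp
  | succ n ih => rw [Int.cast_add, Int.cast_one, hstep, ih]
  | pred n ih => rw [← ih, ← hstep, Int.cast_sub, Int.cast_one, sub_add_cancel]

end RingEquiv

/-- (i) `τ(Λ_b) = Λ_{τ(b)}` with `τ(b) = b(t+1)`; (ii) if
`a = ∏_{i∈I} P_i^{r_i}` is monic nonconstant with the `P_i` pairwise distinct monic
irreducible, and `J ⊆ I` is such that (1) for distinct `j₁, j₂ ∈ J` and all `h ∈ ℤ`,
`P_{j₁}` and `τ^h(P_{j₂})` are coprime, and (2) every `i ∈ I∖J` satisfies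
`τ^h(P_i) = P_j` for some `h ∈ ℤ`, `j ∈ J` with `r_i ≤ r_j`, then
`K(Λ_a) = K(Λ_â)` where `â = ∏_{j∈J} P_j^{r_j}` and `K = k(ν)`. -/
theorem stmt_12 {F : Type*} [Field F] [CharZero F] (τ : F ≃+* F) (ν : F)
    (hν : τ ν = ν + 1) :
    (∀ b : Polynomial (kfix (τ : F →+* F)),
      ⇑τ '' ((LinearMap.ker (carlitz (τ : F →+* F) ν b) : Submodule _ F) : Set F) =
        ((LinearMap.ker (carlitz (τ : F →+* F) ν (b.comp (X + 1))) : Submodule _ F) : Set F))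
    ∧
    (∀ (I : Type) [Fintype I] (P : I → Polynomial (kfix (τ : F →+* F))) (r : I → ℕ)
      (J : Finset I),
      (∀ i, (P i).Monic) → (∀ i, Irreducible (P i)) → Function.Injective P →
      (∀ i, 1 ≤ r i) → 0 < (∏ i, P i ^ r i).natDegree →
      (∀ j₁ ∈ J, ∀ j₂ ∈ J, j₁ ≠ j₂ → ∀ h : ℤ,
        IsCoprime (P j₁) ((P j₂).comp (X + C (h : kfix (τ : F →+* F))))) →
      (∀ i ∉ J, ∃ h : ℤ, ∃ j ∈ J,
        (P i).comp (X + C (h : kfix (τ : F →+* F))) = P j ∧ r i ≤ r j) →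
      Subfield.closure (((kfix (τ : F →+* F) : Set F) ∪ {ν}) ∪
          ((LinearMap.ker (carlitz (τ : F →+* F) ν (∏ i, P i ^ r i)) : Submodule _ F) : Set F)) =
        Subfield.closure (((kfix (τ : F →+* F) : Set F) ∪ {ν}) ∪
          ((LinearMap.ker (carlitz (τ : F →+* F) ν (∏ j ∈ J, P j ^ r j)) : Submodule _ F) : Set F))) := by
  refine ⟨image_ker_carlitz τ ν hν, fun I _ P r J hmon hirr hinj _ _ _ hshift => ?_⟩
  rw [← toSubfield_carlitzTorsionField, ← toSubfield_carlitzTorsionField]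
  congr 1
  refine le_antisymm (carlitzTorsionField_prod_le _ ν (fun i _ j _ hij => ?_)
    (self_mem_carlitzTorsionField _ ν _) fun i _ => ?_)
    (carlitzTorsionField_mono _ ν (Finset.prod_dvd_prod_of_subset _ _ _ J.subset_univ))
  · exact (hmon i).isCoprime_pow_of_irreducible (hmon j) (hirr i) (hirr j) (hinj.ne hij) _ _
  by_cases hi : i ∈ J
  · exact carlitzTorsionField_mono _ ν (Finset.dvd_prod_of_mem _ hi)
  obtain ⟨h, j, hj, hPij, hrij⟩ := hshift i hi
  calc carlitzTorsionField (τ : F →+* F) ν (P i ^ r i)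
      = carlitzTorsionField (τ : F →+* F) ν ((P i ^ r i).comp (X + C (h : kfix (τ : F →+* F)))) :=
        (carlitzTorsionField_comp_X_add_intCast τ ν hν (pow_ne_zero _ (hmon i).ne_zero) h).symm
    _ = carlitzTorsionField (τ : F →+* F) ν (P j ^ r i) := by rw [pow_comp, hPij]
    _ ≤ carlitzTorsionField (τ : F →+* F) ν (P j ^ r j) :=
        carlitzTorsionField_mono _ ν (pow_dvd_pow _ hrij)
    _ ≤ carlitzTorsionField (τ : F →+* F) ν (∏ j ∈ J, P j ^ r j) :=
        carlitzTorsionField_mono _ ν (Finset.dvd_prod_of_mem _ hj)
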